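/- arXiv:2301.03219 — 7 statements merged into one kernel-verified Lean document; each statement's English description precedes it below -/
import Mathlib

section
/- Let R be a ring with identity, n ≥ 2, and let {s_ijk : i,j,k ∈ {1,…,n}} be a factor system over R. Then the multiplication defined on n×n matrices over R by (A·B)_{ij} = Σ_{k=1}^n s_{ikj}·a_{ik}·b_{kj} is associative: (A·B)·C = A·(B·C) for all n×n matrices A, B, C over R. -/
/-- The twisted product of `n × n` matrices over `R` with respect to a family
`s : Fin n → Fin n → Fin n → R`:  `(A · B) i j = ∑ k, s i k j * A i k * B k j`. -/
def twistedMul {R : Type*} [Ring R] {n : ℕ} (s : Fin n → Fin n → Fin n → R)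
    (A B : Matrix (Fin n) (Fin n) R) : Matrix (Fin n) (Fin n) R :=
  fun i j => ∑ k, s i k j * A i k * B k j

section
variable {R : Type*} [Ring R] {n : ℕ} {s : Fin n → Fin n → Fin n → R}

theorem twistedMul_twistedMul_apply_left (hs : ∀ i j k x, Commute (s i j k) x)
    (A B C : Matrix (Fin n) (Fin n) R) (i j : Fin n) :
    twistedMul s (twistedMul s A B) C i j =
      ∑ k, ∑ m, s i k m * s i m j * (A i k * B k m * C m j) := by
  simp only [twistedMul, Finset.sum_mul, Finset.mul_sum]
  rw [Finset.sum_comm]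
  refine Finset.sum_congr rfl fun k _ => Finset.sum_congr rfl fun m _ => ?_
  simp only [mul_assoc, (hs i m j _).left_comm]

theorem twistedMul_twistedMul_apply_right (hs : ∀ i j k x, Commute (s i j k) x)
    (A B C : Matrix (Fin n) (Fin n) R) (i j : Fin n) :
    twistedMul s A (twistedMul s B C) i j =
      ∑ k, ∑ m, s i k j * s k m j * (A i k * B k m * C m j) := by
  simp only [twistedMul, Finset.mul_sum]
  refine Finset.sum_congr rfl fun k _ => Finset.sum_congr rfl fun m _ => ?_
  simp only [mul_assoc, (hs k m j _).left_comm]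

end

theorem twistedMul_assoc_general {R : Type*} [Ring R] {n : ℕ}
    (s : Fin n → Fin n → Fin n → R)
    (hcentral : ∀ i j k, s i j k ∈ Subring.center R)
    (hrel : ∀ i j k l, s i j k * s i k l = s i j l * s j k l)
    (A B C : Matrix (Fin n) (Fin n) R) :
    twistedMul s (twistedMul s A B) C = twistedMul s A (twistedMul s B C) := by
  have hs : ∀ i j k x, Commute (s i j k) x := fun i j k x =>
    (Subring.mem_center_iff.mp (hcentral i j k) x).symm
  ext i j
  rw [twistedMul_twistedMul_apply_left hs, twistedMul_twistedMul_apply_right hs]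
  simp only [hrel]

/-- The twisted multiplication attached to a factor system is associative. -/
theorem twistedMul_assoc {R : Type*} [Ring R] {n : ℕ} (hn : 2 ≤ n)
    (s : Fin n → Fin n → Fin n → R)
    (hcentral : ∀ i j k, s i j k ∈ Subring.center R)
    (hs1 : ∀ i k, s i i k = 1) (hs2 : ∀ i k, s i k k = 1)
    (hrel : ∀ i j k l, s i j k * s i k l = s i j l * s j k l)
    (A B C : Matrix (Fin n) (Fin n) R) :
    twistedMul s (twistedMul s A B) C = twistedMul s A (twistedMul s B C) :=
  twistedMul_assoc_general s hcentral hrel A B C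
end

section
/- Let R be a ring with identity, n ≥ 2, and let {s_ijk} be a factor system over R. Then for all pairwise distinct indices i, j, k ∈ {1,…,n} the following relations hold: s_iji = s_ijk·s_jik = s_kij·s_kji; s_jkj = s_jki·s_kji = s_ijk·s_ikj; and s_iki = s_ikj·s_kij = s_jik·s_jki. -/
section Cocycle

variable {ι M : Type*} [MulOneClass M] {s : ι → ι → ι → M}

theorem cocycle_apply_self_eq_mul_of_left_eq_one (hs1 : ∀ i k, s i i k = 1)
    (hrel : ∀ i j k l, s i j k * s i k l = s i j l * s j k l) (i j k : ι) :
    s i j i = s i j k * s j i k := by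
  simpa only [hs1, mul_one] using hrel i j i k

theorem cocycle_apply_self_eq_mul_of_right_eq_one (hs2 : ∀ i k, s i k k = 1)
    (hrel : ∀ i j k l, s i j k * s i k l = s i j l * s j k l) (i j k : ι) :
    s i j i = s k i j * s k j i := by
  simpa only [hs2, one_mul] using (hrel k i j i).symm

end Cocycle

theorem factorSystem_relations_three_general {R : Type*} [Ring R] {n : ℕ}
    (s : Fin n → Fin n → Fin n → R)
    (hs1 : ∀ i k, s i i k = 1) (hs2 : ∀ i k, s i k k = 1)
    (hrel : ∀ i j k l, s i j k * s i k l = s i j l * s j k l)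
    (i j k : Fin n) :
    (s i j i = s i j k * s j i k ∧ s i j i = s k i j * s k j i) ∧
    (s j k j = s j k i * s k j i ∧ s j k j = s i j k * s i k j) ∧
    (s i k i = s i k j * s k i j ∧ s i k i = s j i k * s j k i) :=
  have left := cocycle_apply_self_eq_mul_of_left_eq_one hs1 hrel
  have right := cocycle_apply_self_eq_mul_of_right_eq_one hs2 hrel
  ⟨⟨left i j k, right i j k⟩, ⟨left j k i, right j k i⟩, ⟨left i k j, right i k j⟩⟩

/-- Relations (3): for a factor system `s` and pairwise distinct indices `i, j, k`,
`s_iji = s_ijk * s_jik = s_kij * s_kji`, `s_jkj = s_jki * s_kji = s_ijk * s_ikj`,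
and `s_iki = s_ikj * s_kij = s_jik * s_jki`. -/
theorem factorSystem_relations_three {R : Type*} [Ring R] {n : ℕ} (hn : 2 ≤ n)
    (s : Fin n → Fin n → Fin n → R)
    (hcentral : ∀ i j k, s i j k ∈ Subring.center R)
    (hs1 : ∀ i k, s i i k = 1) (hs2 : ∀ i k, s i k k = 1)
    (hrel : ∀ i j k l, s i j k * s i k l = s i j l * s j k l)
    (i j k : Fin n) (hij : i ≠ j) (hik : i ≠ k) (hjk : j ≠ k) :
    (s i j i = s i j k * s j i k ∧ s i j i = s k i j * s k j i) ∧
    (s j k j = s j k i * s k j i ∧ s j k j = s i j k * s i k j) ∧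
    (s i k i = s i k j * s k i j ∧ s i k i = s j i k * s j k i) :=
  factorSystem_relations_three_general s hs1 hs2 hrel i j k
end

section
/- Let R be a ring with identity, n ≥ 2, let {s_ijk} be a factor system over R, let τ be a permutation of {1,…,n}, and set t_ijk = s_{τ(i)τ(j)τ(k)}. For an n×n matrix A = (a_ij) over R, let φ(A) denote the matrix with (i,j) entry a_{τ(i)τ(j)}. Then for all n×n matrices A, B over R, φ(A ∗_s B) = φ(A) ∗_t φ(B), where (A ∗_s B)_{ij} = Σ_{k=1}^n s_{ikj}·a_{ik}·b_{kj} and (C ∗_t D)_{ij} = Σ_{k=1}^n t_{ikj}·c_{ik}·d_{kj}. (Together with the obvious additivity and bijectivity of φ, this shows that the formal matrix rings M(n,R,Σ) and M(n,R,τΣ) are isomorphic under the correspondence A → τA.) -/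
theorem twistedMul_submatrix_equiv {R : Type*} [Ring R] {n : ℕ}
    (s : Fin n → Fin n → Fin n → R) (e : Fin n ≃ Fin n) (A B : Matrix (Fin n) (Fin n) R) :
    (twistedMul s A B).submatrix e e =
      twistedMul (fun i j k => s (e i) (e j) (e k)) (A.submatrix e e) (B.submatrix e e) := by
  ext i j
  exact (Fintype.sum_equiv e _ _ fun _ => rfl).symm

theorem permute_twistedMul_general {R : Type*} [Ring R] {n : ℕ}
    (s : Fin n → Fin n → Fin n → R)
    (τ : Equiv.Perm (Fin n)) (A B : Matrix (Fin n) (Fin n) R) :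
    let t : Fin n → Fin n → Fin n → R := fun i j k => s (τ i) (τ j) (τ k)
    let φ : Matrix (Fin n) (Fin n) R → Matrix (Fin n) (Fin n) R :=
      fun M => fun i j => M (τ i) (τ j)
    φ (twistedMul s A B) = twistedMul t (φ A) (φ B) :=
  twistedMul_submatrix_equiv s τ A B

/-- The map `A ↦ τA`, `(τA) i j = A (τ i) (τ j)`, is multiplicative from the twisted
multiplication of the factor system `s` to that of the permuted factor system
`t i j k = s (τ i) (τ j) (τ k)`.  (Together with additivity and bijectivity, this
gives the ring isomorphism `M(n, R, Σ) ≅ M(n, R, τΣ)`.) -/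
theorem permute_twistedMul {R : Type*} [Ring R] {n : ℕ} (hn : 2 ≤ n)
    (s : Fin n → Fin n → Fin n → R)
    (hcentral : ∀ i j k, s i j k ∈ Subring.center R)
    (hs1 : ∀ i k, s i i k = 1) (hs2 : ∀ i k, s i k k = 1)
    (hrel : ∀ i j k l, s i j k * s i k l = s i j l * s j k l)
    (τ : Equiv.Perm (Fin n)) (A B : Matrix (Fin n) (Fin n) R) :
    let t : Fin n → Fin n → Fin n → R := fun i j k => s (τ i) (τ j) (τ k)
    let φ : Matrix (Fin n) (Fin n) R → Matrix (Fin n) (Fin n) R :=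
      fun M => fun i j => M (τ i) (τ j)
    φ (twistedMul s A B) = twistedMul t (φ A) (φ B) :=
  permute_twistedMul_general s τ A B
end

section
/- Let R be a ring with identity, n ≥ 2, and let {s_ijk} be a factor system over R such that every element s_ijk is either non-invertible in R or equal to 1. Let i, j, k ∈ {1,…,n} be pairwise distinct. Then the three elements s_iji, s_iki, s_jkj satisfy exactly one of the following three conditions: (1) all three elements are equal to 1; (2) exactly two of these three elements are non-invertible and the third one is equal to 1; (3) all three elements are non-invertible. -/
/-!
The cocycle identity gives `s i j k * s i k j = s i k j * s i j k = s j k j`, so `s i j k` is a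
unit whenever `s j k j` is. The identity `s i j k * s i k i = s i j i * s j k i` then shows that if
two of `s i j i`, `s i k i`, `s j k j` are units, so is the third. When every value is either
non-invertible or `1`, being a unit means being `1`, so exactly one non-invertible element among the
three is impossible, and the remaining patterns are the three cases of the trichotomy.
-/

theorem isUnit_of_isUnit_mul_of_isUnit_mul_swap {M : Type*} [Monoid M] {a b : M}
    (hab : IsUnit (a * b)) (hba : IsUnit (b * a)) : IsUnit a := by
  obtain ⟨u, hu⟩ := hab
  obtain ⟨v, hv⟩ := hba
  have hright : a * (b * ↑u⁻¹) = 1 := by rw [← mul_assoc, ← hu, Units.mul_inv]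
  have hleft : (↑v⁻¹ * b) * a = 1 := by rw [mul_assoc, ← hv, Units.inv_mul]
  have hinv : ↑v⁻¹ * b = b * ↑u⁻¹ := left_inv_eq_right_inv hleft hright
  exact isUnit_iff_exists.mpr ⟨b * ↑u⁻¹, hright, hinv ▸ hleft⟩

structure IsFactorSystem {ι M : Type*} [Monoid M] (s : ι → ι → ι → M) : Prop where
  left_eq_one : ∀ i k, s i i k = 1
  right_eq_one : ∀ i k, s i k k = 1
  cocycle : ∀ i j k l, s i j k * s i k l = s i j l * s j k l

namespace IsFactorSystem

variable {ι M : Type*} [Monoid M] {s : ι → ι → ι → M}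

theorem diag_symm (hs : IsFactorSystem s) (i j : ι) : s i j i = s j i j := by
  simpa only [hs.left_eq_one, hs.right_eq_one, mul_one, one_mul] using hs.cocycle i j i j

theorem mul_swap_eq_diag (hs : IsFactorSystem s) (i j k : ι) :
    s i j k * s i k j = s j k j := by
  simpa only [hs.right_eq_one, one_mul] using hs.cocycle i j k j

theorem isUnit_of_isUnit_diag (hs : IsFactorSystem s) (i : ι) {j k : ι}
    (h : IsUnit (s j k j)) : IsUnit (s i j k) := by
  refine isUnit_of_isUnit_mul_of_isUnit_mul_swap (b := s i k j) ?_ ?_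
  · rwa [hs.mul_swap_eq_diag]
  · rwa [hs.mul_swap_eq_diag, ← hs.diag_symm]

theorem isUnit_diag_of_isUnit_diag (hs : IsFactorSystem s) {i j k : ι}
    (hik : IsUnit (s i k i)) (hjk : IsUnit (s j k j)) : IsUnit (s i j i) := by
  have hjki : IsUnit (s j k i) := hs.isUnit_of_isUnit_diag j (hs.diag_symm i k ▸ hik)
  have hprod : IsUnit (s i j i * s j k i) :=
    hs.cocycle i j k i ▸ (hs.isUnit_of_isUnit_diag i hjk).mul hik
  exact (IsUnit.mul_right_iff hjki).mp hprod

end IsFactorSystem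

theorem factorSystem_trichotomy_general {R : Type*} [Ring R] {n : ℕ}
    (s : Fin n → Fin n → Fin n → R)
    (hs1 : ∀ i k, s i i k = 1) (hs2 : ∀ i k, s i k k = 1)
    (hrel : ∀ i j k l, s i j k * s i k l = s i j l * s j k l)
    (hbin : ∀ i j k, ¬ IsUnit (s i j k) ∨ s i j k = 1)
    (i j k : Fin n) :
    let a := s i j i; let b := s i k i; let c := s j k j
    let P1 := a = 1 ∧ b = 1 ∧ c = 1
    let P2 := (¬ IsUnit a ∧ ¬ IsUnit b ∧ c = 1) ∨ (¬ IsUnit a ∧ ¬ IsUnit c ∧ b = 1) ∨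
      (¬ IsUnit b ∧ ¬ IsUnit c ∧ a = 1)
    let P3 := ¬ IsUnit a ∧ ¬ IsUnit b ∧ ¬ IsUnit c
    (P1 ∧ ¬ P2 ∧ ¬ P3) ∨ (P2 ∧ ¬ P1 ∧ ¬ P3) ∨ (P3 ∧ ¬ P1 ∧ ¬ P2) := by
  intro a b c P1 P2 P3
  have hs : IsFactorSystem s := ⟨hs1, hs2, hrel⟩
  have unit_a : IsUnit b → IsUnit c → IsUnit a := hs.isUnit_diag_of_isUnit_diag
  have unit_b : IsUnit a → IsUnit c → IsUnit b := fun ha hc =>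
    hs.isUnit_diag_of_isUnit_diag (j := k) (k := j) ha (by rwa [← hs.diag_symm])
  have unit_c : IsUnit a → IsUnit b → IsUnit c := fun ha hb =>
    hs.isUnit_diag_of_isUnit_diag (k := i) (by rwa [← hs.diag_symm]) (by rwa [← hs.diag_symm])
  have eq_one_iff {x : R} (hx : ¬ IsUnit x ∨ x = 1) : x = 1 ↔ IsUnit x :=
    ⟨fun h => h ▸ isUnit_one, hx.resolve_left ∘ not_not_intro⟩
  simp only [P1, P2, P3, eq_one_iff (x := a) (hbin i j i),
    eq_one_iff (x := b) (hbin i k i), eq_one_iff (x := c) (hbin j k j)]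
  by_cases IsUnit a <;> by_cases IsUnit b <;> by_cases IsUnit c <;> simp_all

/-- Lemma 2.1: if every factor of a factor system is non-invertible or equal to `1`,
then for pairwise distinct `i, j, k` the elements `s_iji`, `s_iki`, `s_jkj` satisfy
exactly one of: (1) all three equal `1`; (2) exactly two are non-invertible and the
third equals `1`; (3) all three are non-invertible. -/
theorem factorSystem_trichotomy {R : Type*} [Ring R] {n : ℕ} (hn : 2 ≤ n)
    (s : Fin n → Fin n → Fin n → R)
    (hcentral : ∀ i j k, s i j k ∈ Subring.center R)
    (hs1 : ∀ i k, s i i k = 1) (hs2 : ∀ i k, s i k k = 1)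
    (hrel : ∀ i j k l, s i j k * s i k l = s i j l * s j k l)
    (hbin : ∀ i j k, ¬ IsUnit (s i j k) ∨ s i j k = 1)
    (i j k : Fin n) (hij : i ≠ j) (hik : i ≠ k) (hjk : j ≠ k) :
    let a := s i j i; let b := s i k i; let c := s j k j
    let P1 := a = 1 ∧ b = 1 ∧ c = 1
    let P2 := (¬ IsUnit a ∧ ¬ IsUnit b ∧ c = 1) ∨ (¬ IsUnit a ∧ ¬ IsUnit c ∧ b = 1) ∨
      (¬ IsUnit b ∧ ¬ IsUnit c ∧ a = 1)
    let P3 := ¬ IsUnit a ∧ ¬ IsUnit b ∧ ¬ IsUnit c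
    (P1 ∧ ¬ P2 ∧ ¬ P3) ∨ (P2 ∧ ¬ P1 ∧ ¬ P3) ∨ (P3 ∧ ¬ P1 ∧ ¬ P2) :=
  factorSystem_trichotomy_general s hs1 hs2 hrel hbin i j k
end

section
/- Let R be a ring with identity, n ≥ 2, and let {s_ijk} be a factor system over R such that every element s_ijk is either non-invertible in R or equal to 1. Define a binary relation ∼ on {1,…,n} by i ∼ j if and only if s_iji = 1. Then ∼ is an equivalence relation, i.e., it is reflexive, symmetric, and transitive. -/
/-!
Since `s` is a factor system, `s i k i = s k i k`, which makes `∼` symmetric. For transitivity,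
if `i ∼ j` and `j ∼ k`, the cocycle identity gives `x * s i k i * y = 1 = y * s i k i * x` with
`x = s i j k` and `y = s k j i`, so `s i k i` is invertible, hence equal to `1`.
-/

theorem isUnit_of_mul_mul_eq_one_of_mul_mul_eq_one {M : Type*} [Monoid M] {x a y : M}
    (hxay : x * a * y = 1) (hyax : y * a * x = 1) : IsUnit a := by
  have hay : a * y = y * a := by
    calc a * y = (y * a * x) * (a * y) := by rw [hyax, one_mul]
      _ = y * a * (x * a * y) := by simp only [mul_assoc]
      _ = y * a := by rw [hxay, mul_one]
  have hxa : x * a = a * x := by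
    calc x * a = (x * a) * (y * a * x) := by rw [hyax, mul_one]
      _ = (x * a * y) * (a * x) := by simp only [mul_assoc]
      _ = a * x := by rw [hxay, one_mul]
  refine ⟨⟨a, y * x, ?_, ?_⟩, rfl⟩
  · rw [← mul_assoc, hay, hyax]
  · rw [mul_assoc, hxa, ← mul_assoc, hyax]

structure IsFactorSystem_s7 {ι R : Type*} [Monoid R] (s : ι → ι → ι → R) : Prop where
  left_eq_one : ∀ i k, s i i k = 1
  right_eq_one : ∀ i k, s i k k = 1
  cocycle : ∀ i j k l, s i j k * s i k l = s i j l * s j k l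

namespace IsFactorSystem_s7

variable {ι R : Type*} [Monoid R] {s : ι → ι → ι → R}

theorem swap_eq (hs : IsFactorSystem_s7 s) (i k : ι) : s i k i = s k i k := by
  simpa only [hs.left_eq_one, hs.right_eq_one, mul_one, one_mul] using hs.cocycle i k i k

theorem mul_swap_eq_one (hs : IsFactorSystem_s7 s) {j k : ι} (hjk : s j k j = 1) (i : ι) :
    s j k i * s k j i = 1 := by
  simpa only [hjk, hs.left_eq_one, one_mul] using (hs.cocycle j k j i).symm

theorem mul_eq_of_eq_one (hs : IsFactorSystem_s7 s) {i j : ι} (hij : s i j i = 1) (k : ι) :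
    s i j k * s i k i = s j k i := by
  simpa only [hij, one_mul] using hs.cocycle i j k i

theorem isUnit_of_eq_one_of_eq_one (hs : IsFactorSystem_s7 s) {i j k : ι} (hij : s i j i = 1)
    (hjk : s j k j = 1) : IsUnit (s i k i) := by
  have hji : s j i j = 1 := hs.swap_eq j i ▸ hij
  have hkj : s k j k = 1 := hs.swap_eq k j ▸ hjk
  refine isUnit_of_mul_mul_eq_one_of_mul_mul_eq_one (x := s i j k) (y := s k j i) ?_ ?_
  · rw [hs.mul_eq_of_eq_one hij, hs.mul_swap_eq_one hjk]
  · rw [hs.swap_eq i k, hs.mul_eq_of_eq_one hkj, hs.mul_swap_eq_one hji]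

end IsFactorSystem_s7

theorem factorSystem_equivalence_general {R : Type*} [Ring R] {n : ℕ}
    (s : Fin n → Fin n → Fin n → R)
    (hs1 : ∀ i k, s i i k = 1) (hs2 : ∀ i k, s i k k = 1)
    (hrel : ∀ i j k l, s i j k * s i k l = s i j l * s j k l)
    (hbin : ∀ i j k, ¬ IsUnit (s i j k) ∨ s i j k = 1) :
    Equivalence (fun i j : Fin n => s i j i = 1) := by
  have hs : IsFactorSystem_s7 s := ⟨hs1, hs2, hrel⟩
  refine ⟨fun i => hs1 i i, fun {i j} hij => hs.swap_eq j i ▸ hij, fun hij hjk => ?_⟩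
  exact (hbin _ _ _).resolve_left (not_not.mpr (hs.isUnit_of_eq_one_of_eq_one hij hjk))

/-- Lemma 2.2: if every factor of a factor system is non-invertible or equal to `1`,
then the relation `i ∼ j ⟺ s i j i = 1` is an equivalence relation on `{1, …, n}`. -/
theorem factorSystem_equivalence {R : Type*} [Ring R] {n : ℕ} (hn : 2 ≤ n)
    (s : Fin n → Fin n → Fin n → R)
    (hcentral : ∀ i j k, s i j k ∈ Subring.center R)
    (hs1 : ∀ i k, s i i k = 1) (hs2 : ∀ i k, s i k k = 1)
    (hrel : ∀ i j k l, s i j k * s i k l = s i j l * s j k l)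
    (hbin : ∀ i j k, ¬ IsUnit (s i j k) ∨ s i j k = 1) :
    Equivalence (fun i j : Fin n => s i j i = 1) :=
  factorSystem_equivalence_general s hs1 hs2 hrel hbin
end

section
/- Let R be a ring with identity, n ≥ 2, and let {s_ijk} be a factor system over R such that every element s_ijk is either non-invertible in R or equal to 1. Then there exists a permutation τ of {1,…,n} such that the principal factor matrix of the permuted factor system has block-diagonal form: for all indices i ≤ j ≤ k in {1,…,n}, if s_{τ(i)τ(k)τ(i)} = 1 then s_{τ(i)τ(j)τ(i)} = 1 and s_{τ(j)τ(k)τ(j)} = 1. (Equivalently, after reindexing by τ, the equivalence classes of the relation i ∼ j ⟺ s_iji = 1 are consecutive intervals, so the matrix (s_{τ(i)τ(j)τ(i)}) consists of diagonal blocks of 1s with non-invertible elements on all remaining positions.) -/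
/-! Call `i` and `j` equivalent when `s i j i = 1`. For a factor system whose entries are
non-units or `1` this is an equivalence relation: if `s i j i = 1` then the cocycle identity
makes every `s i j k` a unit with two-sided inverse `s j i k`, hence equal to `1`, and
transitivity follows from the cocycle identity again. Sorting the indices by a labelling of the
equivalence classes with `Fin m` makes every class an interval. -/

theorem Setoid.exists_perm_classes_ordConnected {n : ℕ} (r : Setoid (Fin n)) :
    ∃ τ : Equiv.Perm (Fin n), ∀ i j k, i ≤ j → j ≤ k →
      r (τ i) (τ k) → r (τ i) (τ j) ∧ r (τ j) (τ k) := by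
  classical
  let label : Fin n → Fin (Fintype.card (Quotient r)) :=
    fun i => Fintype.equivFin (Quotient r) (Quotient.mk r i)
  have label_eq_iff : ∀ a b, label a = label b ↔ r a b := fun a b =>
    (Fintype.equivFin _).apply_eq_iff_eq.trans Quotient.eq
  refine ⟨Tuple.sort label, fun i j k hij hjk hik => ?_⟩
  have hconn : (label ∘ Tuple.sort label ⁻¹' {label (Tuple.sort label i)}).OrdConnected :=
    Set.ordConnected_singleton.preimage_mono (Tuple.monotone_sort label)
  have hk : label (Tuple.sort label k) = label (Tuple.sort label i) :=
    ((label_eq_iff _ _).mpr hik).symm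
  have hj : label (Tuple.sort label j) = label (Tuple.sort label i) :=
    hconn.out rfl hk ⟨hij, hjk⟩
  exact ⟨(label_eq_iff _ _).mp hj.symm, (label_eq_iff _ _).mp (hj.trans hk.symm)⟩

structure IsNormalizedCocycle {M ι : Type*} [Monoid M] (s : ι → ι → ι → M) : Prop where
  left_eq_one : ∀ i k, s i i k = 1
  right_eq_one : ∀ i k, s i k k = 1
  mul_eq_mul : ∀ i j k l, s i j k * s i k l = s i j l * s j k l

namespace IsNormalizedCocycle

variable {M ι : Type*} [Monoid M] {s : ι → ι → ι → M}

theorem principal_symm (hs : IsNormalizedCocycle s) (i j : ι) : s i j i = s j i j := by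
  simpa [hs.left_eq_one, hs.right_eq_one] using hs.mul_eq_mul i j i j

theorem isUnit_of_principal_eq_one (hs : IsNormalizedCocycle s) {i j : ι} (h : s i j i = 1)
    (k : ι) : IsUnit (s i j k) := by
  have h' : s j i j = 1 := hs.principal_symm i j ▸ h
  refine isUnit_iff_exists.mpr ⟨s j i k, ?_, ?_⟩
  · simpa [h, hs.left_eq_one] using (hs.mul_eq_mul i j i k).symm
  · simpa [h', hs.left_eq_one] using (hs.mul_eq_mul j i j k).symm

theorem eq_one_of_principal_eq_one (hs : IsNormalizedCocycle s)
    (hbin : ∀ i j k, ¬IsUnit (s i j k) ∨ s i j k = 1) {i j : ι} (h : s i j i = 1) (k : ι) :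
    s i j k = 1 :=
  (hbin i j k).resolve_left (not_not_intro (hs.isUnit_of_principal_eq_one h k))

theorem principal_trans (hs : IsNormalizedCocycle s)
    (hbin : ∀ i j k, ¬IsUnit (s i j k) ∨ s i j k = 1) {i j k : ι} (hij : s i j i = 1)
    (hjk : s j k j = 1) : s i k i = 1 := by
  simpa [hs.eq_one_of_principal_eq_one hbin hij, hs.eq_one_of_principal_eq_one hbin hjk, hij]
    using hs.mul_eq_mul i j k i

def principalSetoid (hs : IsNormalizedCocycle s)
    (hbin : ∀ i j k, ¬IsUnit (s i j k) ∨ s i j k = 1) : Setoid ι where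
  r i j := s i j i = 1
  iseqv :=
    { refl := fun i => hs.left_eq_one i i
      symm := fun h => hs.principal_symm _ _ ▸ h
      trans := hs.principal_trans hbin }

end IsNormalizedCocycle

theorem factorSystem_canonical_form_general {R : Type*} [Ring R] {n : ℕ}
    (s : Fin n → Fin n → Fin n → R)
    (hs1 : ∀ i k, s i i k = 1) (hs2 : ∀ i k, s i k k = 1)
    (hrel : ∀ i j k l, s i j k * s i k l = s i j l * s j k l)
    (hbin : ∀ i j k, ¬ IsUnit (s i j k) ∨ s i j k = 1) :
    ∃ τ : Equiv.Perm (Fin n), ∀ i j k : Fin n, i ≤ j → j ≤ k →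
      s (τ i) (τ k) (τ i) = 1 → s (τ i) (τ j) (τ i) = 1 ∧ s (τ j) (τ k) (τ j) = 1 :=
  (IsNormalizedCocycle.principalSetoid ⟨hs1, hs2, hrel⟩ hbin).exists_perm_classes_ordConnected

/-- Lemma 2.3: if every factor of a factor system is non-invertible or equal to `1`,
then there is a permutation `τ` such that the permuted principal factor matrix
`(s (τ i) (τ j) (τ i))` is block diagonal: the equivalence classes of
`i ∼ j ⟺ s i j i = 1` become consecutive intervals, so blocks of `1`s stand on the
main diagonal and non-invertible elements stand on all remaining positions. -/
theorem factorSystem_canonical_form {R : Type*} [Ring R] {n : ℕ} (hn : 2 ≤ n)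
    (s : Fin n → Fin n → Fin n → R)
    (hcentral : ∀ i j k, s i j k ∈ Subring.center R)
    (hs1 : ∀ i k, s i i k = 1) (hs2 : ∀ i k, s i k k = 1)
    (hrel : ∀ i j k l, s i j k * s i k l = s i j l * s j k l)
    (hbin : ∀ i j k, ¬ IsUnit (s i j k) ∨ s i j k = 1) :
    ∃ τ : Equiv.Perm (Fin n), ∀ i j k : Fin n, i ≤ j → j ≤ k →
      s (τ i) (τ k) (τ i) = 1 → s (τ i) (τ j) (τ i) = 1 ∧ s (τ j) (τ k) (τ j) = 1 :=
  factorSystem_canonical_form_general s hs1 hs2 hrel hbin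
end

section
/- Let R be a local ring (a nontrivial ring in which the non-invertible elements form a proper ideal, equivalently the sum of any two non-units is a non-unit) and let n, m be positive integers. If the full matrix rings M(n,R) and M(m,R) are isomorphic as rings, then n = m. (That is, every local ring satisfies the (n,m)-condition.) -/
/-!
The images under the isomorphism of the diagonal matrix units `Eᵢᵢ` of `M(n, R)` are `n` nonzero
pairwise orthogonal idempotents in `M(m, R)`. The nonunits of the local ring `R` form a two-sided
ideal, the Jacobson radical, with residue division ring `k`. A matrix with all entries in the
radical lies in the radical of `M(m, R)`, so a nonzero idempotent stays nonzero in `M(m, k)`.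
Over a division ring, the rows `vᵢ ᵥ* Fᵢ` picked from `n` nonzero orthogonal idempotents `Fᵢ`
are linearly independent, hence `n ≤ m`; by symmetry `n = m`.
-/

open Matrix

theorem Ideal.isUnit_add_one_of_mem_jacobson_bot {S : Type*} [Ring S] {x : S}
    (hx : x ∈ (⊥ : Ideal S).jacobson) : IsUnit (x + 1) := by
  obtain ⟨z, hz⟩ := Ideal.mem_jacobson_iff.mp hx 1
  have hzx : z * (x + 1) = 1 := by
    rw [Submodule.mem_bot, mul_one, sub_eq_zero] at hz
    rw [mul_add_one, hz]
  -- `z = 1 + (-z * x)` with `-z * x` in the radical, so `z` has a left inverse as well.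
  obtain ⟨w, hw⟩ := Ideal.mem_jacobson_iff.mp ((⊥ : Ideal S).jacobson.mul_mem_left (-z) hx) 1
  have hwz : w * z = 1 := by
    rw [Submodule.mem_bot, mul_one, sub_eq_zero] at hw
    calc w * z = w * (-z * x) + w * (z * (x + 1)) := by noncomm_ring
      _ = 1 := by rw [hzx, mul_one, hw]
  have hw : w = x + 1 := by
    calc w = w * (z * (x + 1)) := by rw [hzx, mul_one]
      _ = x + 1 := by rw [← mul_assoc, hwz, one_mul]
  exact ⟨⟨x + 1, z, hw ▸ hwz, hzx⟩, rfl⟩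

theorem Matrix.card_le_of_orthogonalIdempotents {K ι n : Type*} [DivisionRing K] [Fintype ι]
    [Fintype n] [DecidableEq n] {F : ι → Matrix n n K} (hF : OrthogonalIdempotents F)
    (hne : ∀ i, F i ≠ 0) : Fintype.card ι ≤ Fintype.card n := by
  classical
  have hrow : ∀ i, ∃ v : n → K, v ᵥ* F i ≠ 0 := fun i => by
    by_contra! h
    exact hne i (ext fun a b => by simpa using congrFun (h (Pi.single a 1)) b)
  choose v hv using hrow
  set u : ι → n → K := fun i => v i ᵥ* F i
  have hu : ∀ i j, u i ᵥ* F j = if i = j then u i else 0 := fun i j => by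
    simp only [u, vecMul_vecMul, hF.mul_eq]
    split_ifs <;> simp
  have hli : LinearIndependent K u := by
    refine Fintype.linearIndependent_iff.mpr fun g hg j => ?_
    have hgj := congrArg (· ᵥ* F j) hg
    simp only [sum_vecMul, smul_vecMul, hu, smul_ite, smul_zero, Finset.sum_ite_eq',
      Finset.mem_univ, if_true, zero_vecMul] at hgj
    exact (smul_eq_zero.mp hgj).resolve_right (hv j)
  simpa using hli.fintype_card_le_finrank

theorem Matrix.orthogonalIdempotents_single {R n : Type*} [Semiring R] [Fintype n]
    [DecidableEq n] : OrthogonalIdempotents fun i : n => single i i (1 : R) := by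
  refine OrthogonalIdempotents.iff_mul_eq.mpr fun i j => ?_
  split_ifs with h
  · rw [h, single_mul_single_same, mul_one]
  · exact single_mul_single_of_ne (h := h) ..

namespace IsLocalRing

variable {R : Type*} [Ring R] [IsLocalRing R]

theorem eq_zero_or_eq_one_of_isIdempotentElem {e : R} (he : IsIdempotentElem e) :
    e = 0 ∨ e = 1 := by
  rcases isUnit_or_isUnit_of_add_one (add_sub_cancel e 1) with h | h
  · exact Or.inr (h.mul_left_cancel (by rw [he.eq, mul_one]))
  · exact Or.inl (h.mul_right_eq_zero.mp (by rw [sub_mul, one_mul, he.eq, sub_self]))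

-- If `a * b = 1` then `b * a` is idempotent, and it cannot vanish since `a * (b * a) * b = 1`.
instance (priority := 100) isDedekindFiniteMonoid : IsDedekindFiniteMonoid R where
  mul_eq_one_symm {a b} hab := by
    have hidem : IsIdempotentElem (b * a) := by
      rw [IsIdempotentElem, mul_assoc, ← mul_assoc a, hab, one_mul]
    refine (eq_zero_or_eq_one_of_isIdempotentElem hidem).resolve_left fun h0 =>
      one_ne_zero (α := R) ?_
    calc (1 : R) = a * b * (a * b) := by rw [hab, one_mul]
      _ = a * (b * a) * b := by simp only [mul_assoc]
      _ = 0 := by rw [h0, mul_zero, zero_mul]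

theorem mem_jacobson_bot_of_mem_nonunits {a : R} (ha : a ∈ nonunits R) :
    a ∈ (⊥ : Ideal R).jacobson := by
  refine Ideal.mem_jacobson_iff.mpr fun b => ?_
  have hba : IsUnit (b * a + 1) := by
    rcases isUnit_or_isUnit_of_add_one (add_neg_cancel_right 1 (b * a)) with h | h
    · rwa [add_comm]
    · exact absurd (IsUnit.neg_iff _ |>.mp h) fun h' => ha (isUnit_of_mul_isUnit_right h')
  obtain ⟨u, hu⟩ := hba
  exact ⟨↑u⁻¹, by rw [Submodule.mem_bot, mul_assoc, ← mul_add_one, ← hu, u.inv_mul, sub_self]⟩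

variable (R) in
def nonunitsTwoSidedIdeal : TwoSidedIdeal R :=
  .mk' (nonunits R) (by simp) nonunits_add (fun ha => by simpa [mem_nonunits_iff] using ha)
    (fun hb h => hb (isUnit_of_mul_isUnit_right h)) (fun ha h => ha (isUnit_of_mul_isUnit_left h))

variable (R) in
abbrev ResidueDivisionRing : Type _ := (nonunitsTwoSidedIdeal R).ringCon.Quotient

variable (R) in
def ResidueDivisionRing.mk : R →+* ResidueDivisionRing R := (nonunitsTwoSidedIdeal R).ringCon.mk'

theorem ResidueDivisionRing.mk_surjective : Function.Surjective (ResidueDivisionRing.mk R) :=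
  RingCon.mk'_surjective _

theorem ResidueDivisionRing.mk_eq_zero_iff {a : R} :
    ResidueDivisionRing.mk R a = 0 ↔ a ∈ nonunits R := by
  rw [← TwoSidedIdeal.mem_ker, ResidueDivisionRing.mk, TwoSidedIdeal.ker_ringCon_mk']
  exact TwoSidedIdeal.mem_mk' ..

noncomputable instance : DivisionRing (ResidueDivisionRing R) :=
  have : Nontrivial (ResidueDivisionRing R) :=
    ⟨⟨ResidueDivisionRing.mk R 1, 0, fun h => ResidueDivisionRing.mk_eq_zero_iff.mp h isUnit_one⟩⟩
  DivisionRing.ofIsUnitOrEqZero fun x => by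
    obtain ⟨a, rfl⟩ := ResidueDivisionRing.mk_surjective x
    by_cases ha : IsUnit a
    · exact .inl (ha.map _)
    · exact .inr (ResidueDivisionRing.mk_eq_zero_iff.mpr ha)

variable {n : Type*} [Fintype n] [DecidableEq n]

theorem isUnit_one_sub_of_forall_mem_nonunits {A : Matrix n n R}
    (hA : ∀ i j, A i j ∈ nonunits R) : IsUnit (1 - A) := by
  have hJ : -A ∈ (⊥ : Ideal (Matrix n n R)).jacobson := by
    rw [← Ideal.matrix_bot n]
    exact Ideal.matrix_jacobson_le _ fun i j => mem_jacobson_bot_of_mem_nonunits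
      (by simpa [mem_nonunits_iff] using hA i j)
  simpa [neg_add_eq_sub] using Ideal.isUnit_add_one_of_mem_jacobson_bot hJ

theorem map_mk_ne_zero_of_isIdempotentElem {F : Matrix n n R} (hF : IsIdempotentElem F)
    (hne : F ≠ 0) : F.map (ResidueDivisionRing.mk R) ≠ 0 := fun h => hne <| by
  have hunit := isUnit_one_sub_of_forall_mem_nonunits fun i j =>
    ResidueDivisionRing.mk_eq_zero_iff.mp (congrFun₂ h i j)
  exact hunit.mul_right_eq_zero.mp (by rw [sub_mul, one_mul, hF.eq, sub_self])

theorem card_le_of_orthogonalIdempotents {ι : Type*} [Fintype ι] {F : ι → Matrix n n R}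
    (hF : OrthogonalIdempotents F) (hne : ∀ i, F i ≠ 0) : Fintype.card ι ≤ Fintype.card n :=
  Matrix.card_le_of_orthogonalIdempotents (hF.map (ResidueDivisionRing.mk R).mapMatrix)
    fun i => by exact map_mk_ne_zero_of_isIdempotentElem (hF.idem i) (hne i)

theorem card_le_of_ringEquiv_matrix {m : Type*} [Fintype m] [DecidableEq m]
    (e : Matrix m m R ≃+* Matrix n n R) : Fintype.card m ≤ Fintype.card n :=
  card_le_of_orthogonalIdempotents (Matrix.orthogonalIdempotents_single.map e.toRingHom)
    fun i h => by
      have h₀ : single i i (1 : R) = 0 := by simpa using h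
      simpa using congrFun₂ h₀ i i

end IsLocalRing

theorem localRing_nm_condition_general {R : Type*} [Ring R] [IsLocalRing R]
    (n m : ℕ)
    (e : Matrix (Fin n) (Fin n) R ≃+* Matrix (Fin m) (Fin m) R) :
    n = m := by
  simpa using le_antisymm (IsLocalRing.card_le_of_ringEquiv_matrix e)
    (IsLocalRing.card_le_of_ringEquiv_matrix e.symm)

/-- Every local ring satisfies the `(n, m)`-condition: if the full matrix rings
`M(n, R)` and `M(m, R)` are isomorphic, then `n = m`. -/
theorem localRing_nm_condition {R : Type*} [Ring R] [IsLocalRing R]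
    (n m : ℕ) (hn : 0 < n) (hm : 0 < m)
    (e : Matrix (Fin n) (Fin n) R ≃+* Matrix (Fin m) (Fin m) R) :
    n = m :=
  localRing_nm_condition_general n m e
end
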